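/- arXiv:2602.08279 — 2 statements merged into one kernel-verified Lean document; each statement's English description precedes it below -/
import Mathlib

section
/- Let K and K' be non-degenerate CMIs, K'' = R_K^{K'}, can(pur(K)) = (C, ⟨𝕀_K, 𝕀_K, P_1,…,P_t⟩) and can(pur(K'')) = (C'', ⟨𝕀_{K''}, 𝕀_{K''}, P''_1,…,P''_r⟩) (general notation). If K implies K' and R_K^{K'} ≠ (·,⟨⟩), then for any m_1 ∈ P''_{j_1} and m_2 ∈ P''_{j_2} with 1 ≤ j_1, j_2 ≤ r and j_1 ≠ j_2, there exist indices i_1 ≠ i_2 with 1 ≤ i_1, i_2 ≤ t such that m_1 ∈ P_{i_1} and m_2 ∈ P_{i_2}. -/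
open scoped Classical
open scoped ENNReal

namespace Paper

variable {n : ℕ}

/-- The marginal distribution of the coordinates in `α` of a joint distribution `p` of
the discrete random variables `X_1, …, X_n` (each taking countably many values, coded
as natural numbers). -/
noncomputable def marginal (p : PMF (Fin n → ℕ)) (α : Finset (Fin n)) :
    PMF ({ i // i ∈ α } → ℕ) :=
  p.map fun x i => x i.1

/-- The Shannon (joint) entropy `H(X_α)`. -/
noncomputable def Hm (p : PMF (Fin n → ℕ)) (α : Finset (Fin n)) : ℝ :=
  ∑' y, Real.negMulLog ((marginal p α) y).toReal

/-- The conditional entropy `H(X_β | X_α) = H(X_{β ∪ α}) - H(X_α)`. -/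
noncomputable def Hc (p : PMF (Fin n → ℕ)) (β α : Finset (Fin n)) : ℝ :=
  Hm p (β ∪ α) - Hm p α

/-- Every individual random variable `X_i` has finite Shannon entropy
(the series defining `H(X_i)` is summable). -/
def FiniteEntropy (p : PMF (Fin n → ℕ)) : Prop :=
  ∀ i : Fin n, Summable fun y : ℕ => Real.negMulLog ((p.map fun x => x i) y).toReal

/-- `J(X_{Q_1}, …, X_{Q_k} | X_C) = (∑ i, H(X_{Q_i}|X_C)) - H(X_{Q_1},…,X_{Q_k}|X_C)`;
the joint conditional entropy of the tuple `(X_{Q_1},…,X_{Q_k})` equals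
`H(X_{∪ i, Q_i} | X_C)` since the two tuples determine each other. -/
noncomputable def J (p : PMF (Fin n → ℕ)) (C : Finset (Fin n))
    (Qs : Multiset (Finset (Fin n))) : ℝ :=
  (Qs.map fun Q => Hc p Q C).sum - Hc p Qs.sup C

/-- A conditional mutual independency (CMI) on `{1, …, n}`: a conditioning set `C`
together with a finite multiset `⟨Q_1, …, Q_k⟩` of subsets of `{1, …, n}`. -/
structure CMI (n : ℕ) where
  C : Finset (Fin n)
  Qs : Multiset (Finset (Fin n))

/-- `K` is valid for the joint distribution `p`. -/
def Valid (p : PMF (Fin n → ℕ)) (K : CMI n) : Prop :=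
  J p K.C K.Qs = 0

/-- `K` is degenerate: valid for every finite-entropy joint distribution. -/
def Degenerate (K : CMI n) : Prop :=
  ∀ p : PMF (Fin n → ℕ), FiniteEntropy p → Valid p K

/-- `K ∼ K'`: valid for exactly the same finite-entropy joint distributions. -/
def Equivalent (K K' : CMI n) : Prop :=
  ∀ p : PMF (Fin n → ℕ), FiniteEntropy p → (Valid p K ↔ Valid p K')

/-- `K` implies `K'`. -/
def Implies (K K' : CMI n) : Prop :=
  ∀ p : PMF (Fin n → ℕ), FiniteEntropy p → Valid p K → Valid p K'

/-- `K` is in pure form: every `Q_i` is nonempty and disjoint from `C`. -/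
def IsPure (K : CMI n) : Prop :=
  ∀ Q ∈ K.Qs, Q ≠ ∅ ∧ Q ∩ K.C = ∅

/-- The pure form `pur(K) = (C, ⟨Q_i \ C : Q_i \ C ≠ ∅⟩)`. -/
noncomputable def pur (K : CMI n) : CMI n :=
  ⟨K.C, (K.Qs.map fun Q => Q \ K.C).filter fun Q => Q ≠ ∅⟩

/-- The set `𝕀_K` of repeated indices of `K`: indices lying in `Q_i ∩ Q_j` for two
distinct entries `i ≠ j` of the multiset (automatically `∅` when `k ≤ 1`). -/
noncomputable def repSet (K : CMI n) : Finset (Fin n) :=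
  Finset.univ.filter fun q => 2 ≤ Multiset.card (K.Qs.filter fun Q => q ∈ Q)

/-- The multiset `⟨P_1, …, P_t⟩` of nonempty sets among the `Q_i \ 𝕀_K`. -/
noncomputable def parts (K : CMI n) : Multiset (Finset (Fin n)) :=
  (K.Qs.map fun Q => Q \ repSet K).filter fun P => P ≠ ∅

/-- The multiset of the `P_j`-entries of the canonical form `can(K)`
(general notation). -/
noncomputable def canParts (K : CMI n) : Multiset (Finset (Fin n)) :=
  if Multiset.card K.Qs ≤ 1 then 0
  else if repSet K ≠ ∅ ∧ Multiset.card (parts K) ≤ 1 then 0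
  else parts K

/-- The canonical form `can(K)` (of a pure-form CMI); all degenerate canonical forms
`(·,⟨⟩)` are represented by `⟨∅, 0⟩`. -/
noncomputable def can (K : CMI n) : CMI n :=
  if Multiset.card K.Qs ≤ 1 then ⟨∅, 0⟩
  else if repSet K = ∅ then ⟨K.C, parts K⟩
  else if Multiset.card (parts K) ≤ 1 then ⟨K.C, {repSet K, repSet K}⟩
  else ⟨K.C, repSet K ::ₘ repSet K ::ₘ parts K⟩

/-- `R_K^{K'}`: the CMI "`K'` conditioning on `K`"; the degenerate case `(·,⟨⟩)` is
represented by `⟨∅, 0⟩`. -/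
noncomputable def RCond (K K' : CMI n) : CMI n :=
  let I := repSet (pur K)
  let I' := repSet (pur K')
  let Ts := ((canParts (pur K')).map fun P => P \ I).filter fun T => T ≠ ∅
  if I' \ I = ∅ ∧ Multiset.card Ts ≤ 1 then ⟨∅, 0⟩
  else if I' \ I = ∅ then ⟨K'.C \ I, Ts⟩
  else if Multiset.card Ts ≤ 1 then ⟨K'.C \ I, {I' \ I, I' \ I}⟩
  else ⟨K'.C \ I, (I' \ I) ::ₘ (I' \ I) ::ₘ Ts⟩



/-! ### Auxiliary multiset lemmas -/

lemma two_le_card_filter {α : Type*} [DecidableEq α] {M : Multiset α} {p : α → Prop} [DecidablePred p]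
    {a b : α} (ha : a ∈ M) (hb : b ∈ M.erase a) (hpa : p a) (hpb : p b) :
    2 ≤ Multiset.card (M.filter p) := by
  rw [← Multiset.cons_erase ha, Multiset.filter_cons_of_pos _ hpa, Multiset.card_cons]
  have h1 : b ∈ (M.erase a).filter p := Multiset.mem_filter.2 ⟨hb, hpb⟩
  have := Multiset.card_pos_iff_exists_mem.2 ⟨b, h1⟩
  omega

lemma two_le_card {α : Type*} [DecidableEq α] {M : Multiset α} {a b : α}
    (ha : a ∈ M) (hb : b ∈ M) (hab : a ≠ b) : 2 ≤ Multiset.card M := by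
  have hb' : b ∈ M.erase a := (Multiset.mem_erase_of_ne (Ne.symm hab)).2 hb
  rw [← Multiset.cons_erase ha, Multiset.card_cons]
  have := Multiset.card_pos_iff_exists_mem.2 ⟨b, hb'⟩
  omega

lemma sum_map_ite {α : Type*} (M : Multiset α) (p : α → Prop) [DecidablePred p] (c : ℝ) :
    (M.map fun a => if p a then c else 0).sum = (Multiset.card (M.filter p)) * c := by
  induction M using Multiset.induction with
  | empty => simp
  | cons a M ih =>
    by_cases h : p a <;>
      simp [Multiset.filter_cons, h, ih, add_mul, add_comm]

lemma mem_msup {Qs : Multiset (Finset (Fin n))} {x : Fin n} :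
    x ∈ Qs.sup ↔ ∃ Q ∈ Qs, x ∈ Q := by
  induction Qs using Multiset.induction with
  | empty => simp [Multiset.sup_zero]
  | cons a M ih => simp [Multiset.sup_cons, ih]

/-! ### The two-point distribution and its entropies -/

noncomputable def ubit : PMF Bool := PMF.uniformOfFintype Bool

lemma ubit_apply (b : Bool) : ubit b = 2⁻¹ := by
  simp [ubit, PMF.uniformOfFintype_apply]

lemma map_ubit_apply {β : Type*} (f : Bool → β) (y : β) :
    (ubit.map f) y = (if y = f false then 2⁻¹ else 0) + (if y = f true then 2⁻¹ else 0) := by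
  rw [PMF.map_apply, tsum_bool]
  congr 1 <;> split_ifs <;> simp [ubit_apply]

lemma tsum_negMulLog_const {β : Type*} [Countable β] (f : Bool → β)
    (h : f false = f true) :
    ∑' y, Real.negMulLog ((ubit.map f) y).toReal = 0 := by
  have key : ∀ y, Real.negMulLog ((ubit.map f) y).toReal = 0 := by
    intro y
    rw [map_ubit_apply]
    by_cases hy : y = f true
    · rw [if_pos (h ▸ hy), if_pos hy, ENNReal.inv_two_add_inv_two]
      simp
    · rw [if_neg (h ▸ hy), if_neg hy]
      simp
  rw [tsum_congr key, tsum_zero]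

lemma tsum_negMulLog_inj {β : Type*} [Countable β] (f : Bool → β)
    (h : f false ≠ f true) :
    ∑' y, Real.negMulLog ((ubit.map f) y).toReal = Real.log 2 := by
  have hz : ∀ y ∉ ({f false, f true} : Finset β),
      Real.negMulLog ((ubit.map f) y).toReal = 0 := by
    intro y hy
    simp only [Finset.mem_insert, Finset.mem_singleton, not_or] at hy
    rw [map_ubit_apply, if_neg hy.1, if_neg hy.2]
    simp
  rw [tsum_eq_sum hz, Finset.sum_pair h]
  have hv : ((2:ℝ≥0∞)⁻¹).toReal = 2⁻¹ := by
    simp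
  rw [map_ubit_apply, if_pos rfl, if_neg h, map_ubit_apply, if_neg (Ne.symm h), if_pos rfl]
  rw [add_zero, zero_add, hv]
  rw [Real.negMulLog, Real.log_inv]
  ring

/-- `X_i = Y` (a uniform bit) for `i ∈ s`, `X_i = 0` otherwise. -/
noncomputable def pdist (s : Finset (Fin n)) : PMF (Fin n → ℕ) :=
  ubit.map fun b i => if i ∈ s ∧ b = true then 1 else 0

lemma marginal_pdist (s α : Finset (Fin n)) :
    marginal (pdist s) α
      = ubit.map fun b (i : {i // i ∈ α}) => if i.1 ∈ s ∧ b = true then 1 else 0 := by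
  rw [marginal, pdist, PMF.map_comp]
  rfl

lemma Hm_pdist (s α : Finset (Fin n)) :
    Hm (pdist s) α = if (α ∩ s).Nonempty then Real.log 2 else 0 := by
  rw [Hm, marginal_pdist]
  split_ifs with hns
  · obtain ⟨i₀, hi₀⟩ := hns
    rw [Finset.mem_inter] at hi₀
    apply tsum_negMulLog_inj
    intro hf
    have := congrFun hf ⟨i₀, hi₀.1⟩
    simp [hi₀.2] at this
  · apply tsum_negMulLog_const
    funext i
    have : i.1 ∉ s := by
      intro hmem
      exact hns ⟨i.1, Finset.mem_inter.2 ⟨i.2, hmem⟩⟩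
    simp [this]

lemma finiteEntropy_pdist (s : Finset (Fin n)) : FiniteEntropy (pdist s) := by
  intro i
  have hmap : (pdist s).map (fun x => x i)
      = ubit.map fun b => if i ∈ s ∧ b = true then 1 else 0 := by
    rw [pdist, PMF.map_comp]
    rfl
  rw [hmap]
  apply summable_of_ne_finset_zero (s := ({0, 1} : Finset ℕ))
  intro y hy
  simp only [Finset.mem_insert, Finset.mem_singleton, not_or] at hy
  have hval : ∀ b : Bool, y ≠ (if i ∈ s ∧ b = true then 1 else 0) := by
    intro b
    split_ifs
    · exact hy.2
    · exact hy.1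
  rw [map_ubit_apply, if_neg (hval false), if_neg (hval true)]
  simp

/-! ### The value of `J` on `pdist s` -/

lemma Hc_pdist (s β γ : Finset (Fin n)) :
    Hc (pdist s) β γ = (if ((β ∪ γ) ∩ s).Nonempty then Real.log 2 else 0)
      - (if (γ ∩ s).Nonempty then Real.log 2 else 0) := by
  rw [Hc, Hm_pdist, Hm_pdist]

lemma Hc_pdist_of_empty (s β γ : Finset (Fin n)) (hγ : γ ∩ s = ∅) :
    Hc (pdist s) β γ = if (β ∩ s).Nonempty then Real.log 2 else 0 := by
  rw [Hc_pdist, Finset.union_inter_distrib_right, hγ, Finset.union_empty]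
  simp

lemma sup_inter_nonempty (s : Finset (Fin n)) (Qs : Multiset (Finset (Fin n))) :
    (Qs.sup ∩ s).Nonempty ↔ 0 < Multiset.card (Qs.filter fun Q => (Q ∩ s).Nonempty) := by
  rw [Multiset.card_pos_iff_exists_mem]
  constructor
  · rintro ⟨x, hx⟩
    rw [Finset.mem_inter, mem_msup] at hx
    obtain ⟨⟨Q, hQ, hxQ⟩, hxs⟩ := hx
    exact ⟨Q, Multiset.mem_filter.2 ⟨hQ, ⟨x, Finset.mem_inter.2 ⟨hxQ, hxs⟩⟩⟩⟩
  · rintro ⟨Q, hQ⟩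
    rw [Multiset.mem_filter] at hQ
    obtain ⟨x, hx⟩ := hQ.2
    rw [Finset.mem_inter] at hx
    exact ⟨x, Finset.mem_inter.2 ⟨mem_msup.2 ⟨Q, hQ.1, hx.1⟩, hx.2⟩⟩

lemma J_pdist_of_empty (s C : Finset (Fin n)) (Qs : Multiset (Finset (Fin n)))
    (hC : C ∩ s = ∅) :
    J (pdist s) C Qs = (Multiset.card (Qs.filter fun Q => (Q ∩ s).Nonempty)) * Real.log 2
      - (if (Qs.sup ∩ s).Nonempty then Real.log 2 else 0) := by
  rw [J, Hc_pdist_of_empty s _ _ hC]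
  congr 1
  rw [Multiset.map_congr rfl fun Q _ => Hc_pdist_of_empty s Q C hC, sum_map_ite]

lemma J_pdist_zero (s C : Finset (Fin n)) (Qs : Multiset (Finset (Fin n)))
    (h : (C ∩ s).Nonempty ∨ Multiset.card (Qs.filter fun Q => (Q ∩ s).Nonempty) ≤ 1) :
    J (pdist s) C Qs = 0 := by
  by_cases hC : (C ∩ s).Nonempty
  · have hne : ∀ β : Finset (Fin n), ((β ∪ C) ∩ s).Nonempty := by
      intro β
      obtain ⟨x, hx⟩ := hC
      rw [Finset.mem_inter] at hx
      exact ⟨x, Finset.mem_inter.2 ⟨Finset.mem_union_right _ hx.1, hx.2⟩⟩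
    have hHc : ∀ β : Finset (Fin n), Hc (pdist s) β C = 0 := by
      intro β
      rw [Hc_pdist, if_pos (hne β), if_pos hC, sub_self]
    rw [J, Multiset.map_congr rfl fun Q _ => hHc Q, hHc Qs.sup]
    simp
  · have hCe : C ∩ s = ∅ := Finset.not_nonempty_iff_eq_empty.1 hC
    rcases h with h | h
    · exact absurd h hC
    rw [J_pdist_of_empty s C Qs hCe]
    set N := Multiset.card (Qs.filter fun Q => (Q ∩ s).Nonempty) with hN
    interval_cases N
    · rw [if_neg]
      · simp
      · rw [sup_inter_nonempty, ← hN]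
        simp
    · rw [if_pos]
      · simp
      · rw [sup_inter_nonempty, ← hN]
        simp

lemma J_pdist_ne (s C : Finset (Fin n)) (Qs : Multiset (Finset (Fin n)))
    (hCe : C ∩ s = ∅)
    (h2 : 2 ≤ Multiset.card (Qs.filter fun Q => (Q ∩ s).Nonempty)) :
    J (pdist s) C Qs ≠ 0 := by
  rw [J_pdist_of_empty s C Qs hCe, if_pos]
  · set N := Multiset.card (Qs.filter fun Q => (Q ∩ s).Nonempty) with hN
    have hlog : 0 < Real.log 2 := Real.log_pos (by norm_num)
    have : (1 : ℝ) ≤ (N : ℝ) - 1 := by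
      have : (2 : ℝ) ≤ (N : ℝ) := by exact_mod_cast h2
      linarith
    intro hcontra
    nlinarith
  · rw [sup_inter_nonempty]
    omega

/-! ### Combinatorial lemmas on `pur`, `repSet`, `parts`, `canParts`, `RCond` -/

lemma repSet_spec (L : CMI n) (q : Fin n) :
    q ∈ repSet L ↔ 2 ≤ Multiset.card (L.Qs.filter fun Q => q ∈ Q) := by
  simp [repSet]

lemma mem_of_mem_repSet {L : CMI n} {q : Fin n} (h : q ∈ repSet L) :
    ∃ Q ∈ L.Qs, q ∈ Q := by
  rw [repSet_spec] at h
  have h0 : 0 < Multiset.card (L.Qs.filter fun Q => q ∈ Q) := by omega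
  obtain ⟨Q, hQ⟩ := Multiset.card_pos_iff_exists_mem.1 h0
  exact ⟨Q, (Multiset.mem_filter.1 hQ).1, (Multiset.mem_filter.1 hQ).2⟩

lemma mem_pur_Qs {L : CMI n} {Q : Finset (Fin n)} :
    Q ∈ (pur L).Qs ↔ (∃ R ∈ L.Qs, R \ L.C = Q) ∧ Q ≠ ∅ := by
  show Q ∈ (L.Qs.map fun Q => Q \ L.C).filter (fun Q => Q ≠ ∅) ↔ _
  rw [Multiset.mem_filter, Multiset.mem_map]

lemma mem_parts {L : CMI n} {P : Finset (Fin n)} :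
    P ∈ parts L ↔ (∃ Q ∈ L.Qs, Q \ repSet L = P) ∧ P ≠ ∅ := by
  show P ∈ (L.Qs.map fun Q => Q \ repSet L).filter (fun P => P ≠ ∅) ↔ _
  rw [Multiset.mem_filter, Multiset.mem_map]

lemma repSet_pur_not_C {L : CMI n} {q : Fin n} (h : q ∈ repSet (pur L)) : q ∉ L.C := by
  obtain ⟨Q, hQ, hq⟩ := mem_of_mem_repSet h
  obtain ⟨⟨R, _, rfl⟩, -⟩ := mem_pur_Qs.1 hQ
  exact (Finset.mem_sdiff.1 hq).2

lemma mem_canParts {L : CMI n} {P : Finset (Fin n)} (h : P ∈ canParts L) : P ∈ parts L := by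
  unfold canParts at h
  split_ifs at h
  · exact absurd h (Multiset.notMem_zero P)
  · exact absurd h (Multiset.notMem_zero P)
  · exact h

lemma canParts_cases (L : CMI n) : canParts L = 0 ∨ canParts L = parts L := by
  unfold canParts
  split_ifs <;> simp

lemma mem_canParts_pur_not_C {L : CMI n} {P : Finset (Fin n)}
    (h : P ∈ canParts (pur L)) {x : Fin n} (hx : x ∈ P) : x ∉ L.C := by
  obtain ⟨⟨Q, hQ, rfl⟩, -⟩ := mem_parts.1 (mem_canParts h)
  obtain ⟨⟨R, _, rfl⟩, -⟩ := mem_pur_Qs.1 hQ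
  exact (Finset.mem_sdiff.1 (Finset.mem_sdiff.1 hx).1).2

lemma card_filter_mem_pur (L : CMI n) {x : Fin n} (hx : x ∉ L.C) :
    Multiset.card ((pur L).Qs.filter fun Q => x ∈ Q)
      = Multiset.card (L.Qs.filter fun Q => x ∈ Q) := by
  show Multiset.card ((((L.Qs.map fun Q => Q \ L.C).filter fun Q => Q ≠ ∅)).filter
      fun Q => x ∈ Q) = _
  rw [Multiset.filter_filter, Multiset.filter_map, Multiset.card_map]
  congr 1
  apply Multiset.filter_congr
  intro Q _
  simp only [Function.comp]
  constructor
  · rintro ⟨h1, -⟩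
    exact (Finset.mem_sdiff.1 h1).1
  · intro h
    have hmem : x ∈ Q \ L.C := Finset.mem_sdiff.2 ⟨h, hx⟩
    exact ⟨hmem, Finset.ne_empty_of_mem hmem⟩

lemma sdiff_filter_step (s x : Finset (Fin n)) (M : Multiset (Finset (Fin n))) :
    Multiset.card ((((M.map fun Q => Q \ x).filter fun Q => Q ≠ ∅)).filter
        fun Q => (Q ∩ s).Nonempty)
      ≤ Multiset.card (M.filter fun Q => (Q ∩ s).Nonempty) := by
  rw [Multiset.filter_filter, Multiset.filter_map, Multiset.card_map]
  apply Multiset.card_le_card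
  apply Multiset.monotone_filter_right
  intro Q hQ
  simp only [Function.comp] at hQ
  obtain ⟨⟨y, hy⟩, -⟩ := hQ
  rw [Finset.mem_inter, Finset.mem_sdiff] at hy
  exact ⟨y, Finset.mem_inter.2 ⟨hy.1.1, hy.2⟩⟩

lemma canParts_step {L : CMI n} {s : Finset (Fin n)}
    (h : 2 ≤ Multiset.card ((canParts (pur L)).filter fun Q => (Q ∩ s).Nonempty)) :
    2 ≤ Multiset.card (L.Qs.filter fun Q => (Q ∩ s).Nonempty) := by
  rcases canParts_cases (pur L) with hc | hc
  · rw [hc] at h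
    simp at h
  rw [hc] at h
  have step1 := sdiff_filter_step s (repSet (pur L)) (pur L).Qs
  have step2 := sdiff_filter_step s L.C L.Qs
  have hparts : parts (pur L) = ((pur L).Qs.map fun Q => Q \ repSet (pur L)).filter
      fun P => P ≠ ∅ := rfl
  have hpur : (pur L).Qs = (L.Qs.map fun Q => Q \ L.C).filter fun Q => Q ≠ ∅ := rfl
  rw [hparts] at h
  rw [← hpur] at step2
  omega

lemma rep_step {L : CMI n} {s : Finset (Fin n)} {x : Fin n}
    (hx : x ∈ repSet (pur L)) (hxs : x ∈ s) :
    2 ≤ Multiset.card (L.Qs.filter fun Q => (Q ∩ s).Nonempty) := by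
  have h1 := (repSet_spec _ _).1 hx
  rw [card_filter_mem_pur L (repSet_pur_not_C hx)] at h1
  refine le_trans h1 (Multiset.card_le_card (Multiset.monotone_filter_right _ ?_))
  intro Q hQ
  exact ⟨x, Finset.mem_inter.2 ⟨hQ, hxs⟩⟩

lemma mem_Ts {K K' : CMI n} {T : Finset (Fin n)}
    (h : T ∈ ((canParts (pur K')).map fun P => P \ repSet (pur K)).filter
        fun T => T ≠ ∅) :
    ∃ P ∈ canParts (pur K'), P \ repSet (pur K) = T := by
  rw [Multiset.mem_filter, Multiset.mem_map] at h
  obtain ⟨⟨P, hP, rfl⟩, -⟩ := h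
  exact ⟨P, hP, rfl⟩

lemma entry_RCond {K K' : CMI n} {R : Finset (Fin n)} (h : R ∈ (RCond K K').Qs) :
    ∀ x ∈ R, x ∉ K'.C ∧ x ∉ repSet (pur K) := by
  have hI' : ∀ x ∈ repSet (pur K') \ repSet (pur K),
      x ∉ K'.C ∧ x ∉ repSet (pur K) := by
    intro x hx
    rw [Finset.mem_sdiff] at hx
    exact ⟨repSet_pur_not_C hx.1, hx.2⟩
  have hT : ∀ T ∈ ((canParts (pur K')).map fun P => P \ repSet (pur K)).filter
      (fun T => T ≠ ∅), ∀ x ∈ T, x ∉ K'.C ∧ x ∉ repSet (pur K) := by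
    intro T hT x hx
    obtain ⟨P, hP, rfl⟩ := mem_Ts hT
    rw [Finset.mem_sdiff] at hx
    exact ⟨mem_canParts_pur_not_C hP hx.1, hx.2⟩
  simp only [RCond] at h
  split_ifs at h
  · exact absurd h (Multiset.notMem_zero R)
  · exact hT R h
  · rw [Multiset.insert_eq_cons, Multiset.mem_cons, Multiset.mem_singleton] at h
    rcases h with rfl | rfl <;> exact hI'
  · rw [Multiset.mem_cons, Multiset.mem_cons] at h
    rcases h with rfl | rfl | h
    · exact hI'
    · exact hI'
    · exact hT R h

lemma two_filter_RCond {K K' : CMI n} {s : Finset (Fin n)}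
    (h : 2 ≤ Multiset.card ((RCond K K').Qs.filter fun Q => (Q ∩ s).Nonempty)) :
    2 ≤ Multiset.card (K'.Qs.filter fun Q => (Q ∩ s).Nonempty) := by
  have hIstep : ((repSet (pur K') \ repSet (pur K)) ∩ s).Nonempty →
      2 ≤ Multiset.card (K'.Qs.filter fun Q => (Q ∩ s).Nonempty) := by
    rintro ⟨x, hx⟩
    rw [Finset.mem_inter, Finset.mem_sdiff] at hx
    exact rep_step hx.1.1 hx.2
  have hTstep : 2 ≤ Multiset.card (((((canParts (pur K')).map
        fun P => P \ repSet (pur K)).filter fun T => T ≠ ∅)).filter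
        fun Q => (Q ∩ s).Nonempty) →
      2 ≤ Multiset.card (K'.Qs.filter fun Q => (Q ∩ s).Nonempty) := by
    intro hTs
    have := sdiff_filter_step s (repSet (pur K)) (canParts (pur K'))
    exact canParts_step (by omega)
  simp only [RCond] at h
  split_ifs at h
  · simp at h
  · exact hTstep h
  · replace h : 2 ≤ Multiset.card ((({repSet (pur K') \ repSet (pur K),
        repSet (pur K') \ repSet (pur K)}) : Multiset (Finset (Fin n))).filter
        fun Q => (Q ∩ s).Nonempty) := h
    have h0 : 0 < Multiset.card ((({repSet (pur K') \ repSet (pur K),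
        repSet (pur K') \ repSet (pur K)}) : Multiset (Finset (Fin n))).filter
        fun Q => (Q ∩ s).Nonempty) := by omega
    obtain ⟨Q, hQ⟩ := Multiset.card_pos_iff_exists_mem.1 h0
    rw [Multiset.mem_filter] at hQ
    have hQm := hQ.1
    rw [Multiset.insert_eq_cons, Multiset.mem_cons, Multiset.mem_singleton] at hQm
    rcases hQm with rfl | rfl <;> exact hIstep hQ.2
  · replace h : 2 ≤ Multiset.card (((repSet (pur K') \ repSet (pur K)) ::ₘ
        (repSet (pur K') \ repSet (pur K)) ::ₘ (((canParts (pur K')).map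
        fun P => P \ repSet (pur K)).filter fun T => T ≠ ∅)).filter
        fun Q => (Q ∩ s).Nonempty) := h
    by_cases hma : ((repSet (pur K') \ repSet (pur K)) ∩ s).Nonempty
    · exact hIstep hma
    · rw [Multiset.filter_cons_of_neg (p := fun Q => (Q ∩ s).Nonempty) _ hma,
        Multiset.filter_cons_of_neg (p := fun Q => (Q ∩ s).Nonempty) _ hma] at h
      exact hTstep h


set_option maxHeartbeats 1000000 in
/-- if `K` implies `K'` and `R_K^{K'} ≠ (·,⟨⟩)`, then any two indices
lying in two distinct `P''`-entries of `can(pur(R_K^{K'}))` lie in two distinct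
`P`-entries of `can(pur(K))`. -/
theorem stmt17 {n : ℕ} (K K' : CMI n)
    (hdK : ¬ Degenerate K) (hdK' : ¬ Degenerate K')
    (himp : Implies K K') (hR : ¬ Degenerate (RCond K K'))
    (Pa Pb : Finset (Fin n)) (hPa : Pa ∈ canParts (pur (RCond K K')))
    (hPb : Pb ∈ (canParts (pur (RCond K K'))).erase Pa)
    (m₁ m₂ : Fin n) (hm₁ : m₁ ∈ Pa) (hm₂ : m₂ ∈ Pb) :
    ∃ Pi ∈ canParts (pur K), ∃ Pj ∈ (canParts (pur K)).erase Pi,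
      m₁ ∈ Pi ∧ m₂ ∈ Pj := by
  classical
  set s : Finset (Fin n) := {m₁, m₂} with hs
  have hm₁s : m₁ ∈ s := by simp [hs]
  have hm₂s : m₂ ∈ s := by simp [hs]
  have h2can : 2 ≤ Multiset.card ((canParts (pur (RCond K K'))).filter
      fun Q => (Q ∩ s).Nonempty) :=
    two_le_card_filter hPa hPb ⟨m₁, Finset.mem_inter.2 ⟨hm₁, hm₁s⟩⟩
      ⟨m₂, Finset.mem_inter.2 ⟨hm₂, hm₂s⟩⟩
  have h2R : 2 ≤ Multiset.card ((RCond K K').Qs.filter fun Q => (Q ∩ s).Nonempty) :=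
    canParts_step h2can
  have h2K' : 2 ≤ Multiset.card (K'.Qs.filter fun Q => (Q ∩ s).Nonempty) :=
    two_filter_RCond h2R
  have hsrc : ∀ (x : Fin n) (P : Finset (Fin n)), P ∈ canParts (pur (RCond K K')) → x ∈ P →
      x ∉ K'.C ∧ x ∉ repSet (pur K) := by
    intro x P hP hx
    obtain ⟨⟨Q, hQ, rfl⟩, -⟩ := mem_parts.1 (mem_canParts hP)
    obtain ⟨⟨R, hR, rfl⟩, -⟩ := mem_pur_Qs.1 hQ
    have hxR : x ∈ R := (Finset.mem_sdiff.1 (Finset.mem_sdiff.1 hx).1).1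
    exact entry_RCond hR x hxR
  obtain ⟨hm₁C', hm₁I⟩ := hsrc m₁ Pa hPa hm₁
  obtain ⟨hm₂C', hm₂I⟩ := hsrc m₂ Pb (Multiset.mem_of_mem_erase hPb) hm₂
  have hC's : K'.C ∩ s = ∅ := by
    rw [Finset.eq_empty_iff_forall_notMem]
    intro x hx
    rw [Finset.mem_inter] at hx
    have hxs := hx.2
    rw [hs] at hxs
    simp only [Finset.mem_insert, Finset.mem_singleton] at hxs
    rcases hxs with rfl | rfl
    · exact hm₁C' hx.1
    · exact hm₂C' hx.1
  have hK'inv : ¬ Valid (pdist s) K' := fun hv =>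
    J_pdist_ne s K'.C K'.Qs hC's h2K' hv
  have hKinv : ¬ Valid (pdist s) K := fun hv =>
    hK'inv (himp _ (finiteEntropy_pdist s) hv)
  have hKfacts : K.C ∩ s = ∅ ∧
      2 ≤ Multiset.card (K.Qs.filter fun Q => (Q ∩ s).Nonempty) := by
    by_contra hcon
    apply hKinv
    show J (pdist s) K.C K.Qs = 0
    apply J_pdist_zero
    rcases Finset.eq_empty_or_nonempty (K.C ∩ s) with he | hne
    · right
      by_contra h2
      exact hcon ⟨he, by omega⟩
    · left
      exact hne
  obtain ⟨hCKs, h2K⟩ := hKfacts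
  have hnotC : ∀ x ∈ s, x ∉ K.C := by
    intro x hxs hxC
    have : x ∈ K.C ∩ s := Finset.mem_inter.2 ⟨hxC, hxs⟩
    rw [hCKs] at this
    exact Finset.notMem_empty x this
  have hm₁CK : m₁ ∉ K.C := hnotC m₁ hm₁s
  have hm₂CK : m₂ ∉ K.C := hnotC m₂ hm₂s
  have hc₁ : Multiset.card (K.Qs.filter fun Q => m₁ ∈ Q) ≤ 1 := by
    have h' := mt (repSet_spec (pur K) m₁).2 hm₁I
    rw [card_filter_mem_pur K hm₁CK] at h'
    omega
  have hc₂ : Multiset.card (K.Qs.filter fun Q => m₂ ∈ Q) ≤ 1 := by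
    have h' := mt (repSet_spec (pur K) m₂).2 hm₂I
    rw [card_filter_mem_pur K hm₂CK] at h'
    omega
  have hfe : (K.Qs.filter fun Q => (Q ∩ s).Nonempty)
      = K.Qs.filter fun Q => m₁ ∈ Q ∨ m₂ ∈ Q := by
    apply Multiset.filter_congr
    intro Q _
    constructor
    · rintro ⟨x, hx⟩
      rw [Finset.mem_inter] at hx
      have hxs := hx.2
      rw [hs] at hxs
      simp only [Finset.mem_insert, Finset.mem_singleton] at hxs
      rcases hxs with rfl | rfl
      · exact Or.inl hx.1
      · exact Or.inr hx.1
    · rintro (h | h)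
      · exact ⟨m₁, Finset.mem_inter.2 ⟨h, hm₁s⟩⟩
      · exact ⟨m₂, Finset.mem_inter.2 ⟨h, hm₂s⟩⟩
  rw [hfe] at h2K
  have hadd := Multiset.filter_add_filter (fun Q => m₁ ∈ Q) (fun Q => m₂ ∈ Q) K.Qs
  have hcards := congrArg Multiset.card hadd
  rw [Multiset.card_add, Multiset.card_add] at hcards
  have hand0 : Multiset.card (K.Qs.filter fun Q => m₁ ∈ Q ∧ m₂ ∈ Q) = 0 := by omega
  have hc₁1 : Multiset.card (K.Qs.filter fun Q => m₁ ∈ Q) = 1 := by omega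
  have hc₂1 : Multiset.card (K.Qs.filter fun Q => m₂ ∈ Q) = 1 := by omega
  obtain ⟨q₁, hq₁⟩ := Multiset.card_eq_one.1 hc₁1
  obtain ⟨q₂, hq₂⟩ := Multiset.card_eq_one.1 hc₂1
  have hq₁m : q₁ ∈ K.Qs ∧ m₁ ∈ q₁ := by
    have hmem : q₁ ∈ K.Qs.filter fun Q => m₁ ∈ Q := by
      rw [hq₁]
      exact Multiset.mem_singleton_self q₁
    exact ⟨(Multiset.mem_filter.1 hmem).1, (Multiset.mem_filter.1 hmem).2⟩
  have hq₂m : q₂ ∈ K.Qs ∧ m₂ ∈ q₂ := by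
    have hmem : q₂ ∈ K.Qs.filter fun Q => m₂ ∈ Q := by
      rw [hq₂]
      exact Multiset.mem_singleton_self q₂
    exact ⟨(Multiset.mem_filter.1 hmem).1, (Multiset.mem_filter.1 hmem).2⟩
  have hnand : ∀ Q ∈ K.Qs, ¬ (m₁ ∈ Q ∧ m₂ ∈ Q) := by
    intro Q hQ hQm
    have hmem : Q ∈ K.Qs.filter fun Q => m₁ ∈ Q ∧ m₂ ∈ Q := Multiset.mem_filter.2 ⟨hQ, hQm⟩
    rw [Multiset.card_eq_zero.1 hand0] at hmem
    exact Multiset.notMem_zero Q hmem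
  have hm₂q₁ : m₂ ∉ q₁ := fun h => hnand q₁ hq₁m.1 ⟨hq₁m.2, h⟩
  have hm₁q₂ : m₁ ∉ q₂ := fun h => hnand q₂ hq₂m.1 ⟨h, hq₂m.2⟩
  have hpur₁ : q₁ \ K.C ∈ (pur K).Qs :=
    mem_pur_Qs.2 ⟨⟨q₁, hq₁m.1, rfl⟩,
      Finset.ne_empty_of_mem (Finset.mem_sdiff.2 ⟨hq₁m.2, hm₁CK⟩)⟩
  have hpur₂ : q₂ \ K.C ∈ (pur K).Qs :=
    mem_pur_Qs.2 ⟨⟨q₂, hq₂m.1, rfl⟩,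
      Finset.ne_empty_of_mem (Finset.mem_sdiff.2 ⟨hq₂m.2, hm₂CK⟩)⟩
  have hm₁Pi : m₁ ∈ (q₁ \ K.C) \ repSet (pur K) :=
    Finset.mem_sdiff.2 ⟨Finset.mem_sdiff.2 ⟨hq₁m.2, hm₁CK⟩, hm₁I⟩
  have hm₂Pj : m₂ ∈ (q₂ \ K.C) \ repSet (pur K) :=
    Finset.mem_sdiff.2 ⟨Finset.mem_sdiff.2 ⟨hq₂m.2, hm₂CK⟩, hm₂I⟩
  have hPiparts : (q₁ \ K.C) \ repSet (pur K) ∈ parts (pur K) :=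
    mem_parts.2 ⟨⟨q₁ \ K.C, hpur₁, rfl⟩, Finset.ne_empty_of_mem hm₁Pi⟩
  have hPjparts : (q₂ \ K.C) \ repSet (pur K) ∈ parts (pur K) :=
    mem_parts.2 ⟨⟨q₂ \ K.C, hpur₂, rfl⟩, Finset.ne_empty_of_mem hm₂Pj⟩
  have hPiPj : (q₁ \ K.C) \ repSet (pur K) ≠ (q₂ \ K.C) \ repSet (pur K) := by
    intro he
    have : m₁ ∈ (q₂ \ K.C) \ repSet (pur K) := he ▸ hm₁Pi
    exact hm₁q₂ (Finset.mem_sdiff.1 (Finset.mem_sdiff.1 this).1).1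
  have h2parts : 2 ≤ Multiset.card (parts (pur K)) :=
    two_le_card hPiparts hPjparts hPiPj
  have hcardle : Multiset.card (parts (pur K)) ≤ Multiset.card (pur K).Qs := by
    have h1 : Multiset.card (((pur K).Qs.map fun Q => Q \ repSet (pur K)).filter
        fun P => P ≠ ∅) ≤ Multiset.card ((pur K).Qs.map fun Q => Q \ repSet (pur K)) :=
      Multiset.card_le_card (Multiset.filter_le _ _)
    rw [Multiset.card_map] at h1
    exact h1
  have hcan : canParts (pur K) = parts (pur K) := by
    have hn1 : ¬ (Multiset.card (pur K).Qs ≤ 1) := by omega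
    have hn2 : ¬ (repSet (pur K) ≠ ∅ ∧ Multiset.card (parts (pur K)) ≤ 1) := by
      rintro ⟨-, hle⟩
      omega
    unfold canParts
    rw [if_neg hn1, if_neg hn2]
  refine ⟨(q₁ \ K.C) \ repSet (pur K), ?_, (q₂ \ K.C) \ repSet (pur K), ?_, hm₁Pi, hm₂Pj⟩
  · rw [hcan]
    exact hPiparts
  · rw [hcan]
    exact (Multiset.mem_erase_of_ne (Ne.symm hPiPj)).2 hPjparts


end Paper
end

section
/- Let C, Q_1,…,Q_k ⊆ {1,…,n} (k ≥ 0), W_i ⊆ Q_i for 1 ≤ i ≤ k, Q = ∪_{i=1}^k Q_i, and let A_1,…,A_r ⊆ {1,…,k} be pairwise disjoint sets of indices with G_j = ∪_{i∈A_j} W_i for 1 ≤ j ≤ r ≤ k. Let R be any subset of Q \ (∪_{j=1}^r G_j). If the CMI K_1 = (C, ⟨Q_1,…,Q_k⟩) is valid for a given joint distribution of X_1,…,X_n, then the CMI ((C ∪ R), ⟨G_1,…,G_r⟩) is valid for that distribution. -/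
open scoped Classical

open Real ENNReal
open scoped NNReal Classical

section helpers
variable {ι : Type*}

lemma summable_iff_ofReal_ne_top {f : ι → ℝ} (hf : ∀ i, 0 ≤ f i) :
    Summable f ↔ ∑' i, ENNReal.ofReal (f i) ≠ ⊤ := by
  constructor
  · intro h
    rw [← ENNReal.ofReal_tsum_of_nonneg hf h]
    exact ENNReal.ofReal_ne_top
  · intro h
    have heq : ∀ i, ENNReal.ofReal (f i) = ((Real.toNNReal (f i) : ℝ≥0) : ℝ≥0∞) := fun i =>
      (ENNReal.ofNNReal_toNNReal (f i)).symm
    rw [tsum_congr heq] at h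
    have hs := ENNReal.tsum_coe_ne_top_iff_summable.1 h
    have hs2 := NNReal.summable_coe.2 hs
    have : (fun i => ((Real.toNNReal (f i) : ℝ≥0) : ℝ)) = f := by
      funext i; exact Real.coe_toNNReal _ (hf i)
    rwa [this] at hs2

lemma tsum_eq_toReal_tsum_ofReal {f : ι → ℝ} (hf : ∀ i, 0 ≤ f i) :
    ∑' i, f i = (∑' i, ENNReal.ofReal (f i)).toReal := by
  by_cases h : Summable f
  · rw [← ENNReal.ofReal_tsum_of_nonneg hf h, ENNReal.toReal_ofReal (tsum_nonneg hf)]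
  · rw [tsum_eq_zero_of_not_summable h]
    have := (summable_iff_ofReal_ne_top hf).not.1 h
    simp at this
    rw [this]; simp
end helpers

section pmfbasic
variable {S T : Type*}

lemma pmf_toReal_nonneg (μ : PMF S) (s : S) : 0 ≤ (μ s).toReal := ENNReal.toReal_nonneg

lemma pmf_toReal_le_one (μ : PMF S) (s : S) : (μ s).toReal ≤ 1 := by
  have := μ.coe_le_one s
  calc (μ s).toReal ≤ (1 : ℝ≥0∞).toReal := ENNReal.toReal_mono ENNReal.one_ne_top this
  _ = 1 := by simp

lemma pmf_negMulLog_nonneg (μ : PMF S) (s : S) : 0 ≤ Real.negMulLog (μ s).toReal :=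
  Real.negMulLog_nonneg (pmf_toReal_nonneg μ s) (pmf_toReal_le_one μ s)

lemma pmf_le_map (μ : PMF S) (g : S → T) (s : S) : μ s ≤ (μ.map g) (g s) := by
  rw [PMF.map_apply]
  have : μ s = if g s = g s then μ s else 0 := by simp
  rw [this]
  exact ENNReal.le_tsum s

lemma pmf_summable_toReal (μ : PMF S) : Summable fun s => (μ s).toReal :=
  ENNReal.summable_toReal (by rw [μ.tsum_coe]; exact ENNReal.one_ne_top)

lemma pmf_tsum_toReal (μ : PMF S) : ∑' s, (μ s).toReal = 1 := by
  rw [← ENNReal.tsum_toReal_eq (fun s => μ.apply_ne_top s), μ.tsum_coe]; simp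

/-- entropy with values in `ℝ≥0∞`. -/
noncomputable def nent (μ : PMF S) : ℝ≥0∞ := ∑' s, ENNReal.ofReal (Real.negMulLog (μ s).toReal)

lemma nent_map_le (μ : PMF S) (g : S → T) : nent (μ.map g) ≤ nent μ := by
  have key : ∀ t : T, ENNReal.ofReal (Real.negMulLog ((μ.map g) t).toReal)
      ≤ ∑' s, if t = g s then ENNReal.ofReal (Real.negMulLog (μ s).toReal) else 0 := by
    intro t
    set m := (μ.map g) t with hm
    set c := -Real.log m.toReal with hc
    have hc0 : 0 ≤ c := by
      rw [hc, neg_nonneg]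
      exact Real.log_nonpos ENNReal.toReal_nonneg (pmf_toReal_le_one (μ.map g) t)
    -- m.toReal = ∑' s, (ite (t = g s) (μ s) 0).toReal
    have hmne : ∀ s, (if t = g s then μ s else 0) ≠ ⊤ := by
      intro s; split <;> simp [PMF.apply_ne_top]
    have hmt : m.toReal = ∑' s, (if t = g s then μ s else 0).toReal := by
      rw [hm, PMF.map_apply, ENNReal.tsum_toReal_eq hmne]
    have hterm : ∀ s, (if t = g s then μ s else 0).toReal * c
        ≤ (if t = g s then Real.negMulLog (μ s).toReal else 0) := by
      intro s
      by_cases h : t = g s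
      · simp only [h, if_true, if_pos]
        rcases eq_or_lt_of_le (pmf_toReal_nonneg μ s) with h0 | h0
        · rw [← h0]; simp [Real.negMulLog]
        · have hle : (μ s).toReal ≤ m.toReal := by
            apply ENNReal.toReal_mono (PMF.apply_ne_top _ _)
            rw [h]; exact pmf_le_map μ g s
          have : c ≤ -Real.log (μ s).toReal := by
            rw [hc, neg_le_neg_iff]
            exact Real.log_le_log h0 hle
          calc (μ s).toReal * c ≤ (μ s).toReal * (-Real.log (μ s).toReal) :=
              mul_le_mul_of_nonneg_left this (pmf_toReal_nonneg μ s)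
          _ = Real.negMulLog (μ s).toReal := by rw [Real.negMulLog]; ring
      · simp [h]
    have hsum : Summable fun s => (if t = g s then μ s else 0).toReal * c := by
      apply Summable.mul_right
      apply ENNReal.summable_toReal
      rw [← PMF.map_apply]
      exact PMF.apply_ne_top _ _
    have h1 : Real.negMulLog m.toReal = ∑' s, (if t = g s then μ s else 0).toReal * c := by
      rw [Real.negMulLog, tsum_mul_right, ← hmt, hc]; ring
    rw [h1, ENNReal.ofReal_tsum_of_nonneg (fun s => ?_) hsum]
    · apply ENNReal.tsum_le_tsum
      intro s
      refine le_trans (ENNReal.ofReal_le_ofReal (hterm s)) ?_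
      split
      · exact le_of_eq rfl
      · simp
    · positivity
  calc nent (μ.map g) ≤ ∑' (t : T) (s : S),
        if t = g s then ENNReal.ofReal (Real.negMulLog (μ s).toReal) else 0 :=
      ENNReal.tsum_le_tsum key
  _ = ∑' (s : S) (t : T),
        if t = g s then ENNReal.ofReal (Real.negMulLog (μ s).toReal) else 0 := ENNReal.tsum_comm
  _ = nent μ := by
      apply tsum_congr; intro s
      exact tsum_ite_eq (g s) _

end pmfbasic

section gibbs
variable {ι : Type*}

lemma gibbs_pointwise {a q : ℝ} (ha0 : 0 ≤ a) (hq0 : 0 ≤ q) (hac : q = 0 → a = 0) :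
    Real.negMulLog a ≤ a * (-Real.log q) + (q - a) := by
  rcases eq_or_lt_of_le ha0 with h | h
  · rw [← h]; simp [Real.negMulLog, hq0]
  · have hq : 0 < q := by
      rcases eq_or_lt_of_le hq0 with h' | h'
      · exact absurd (hac h'.symm) (ne_of_gt h)
      · exact h'
    have hlog := Real.log_le_sub_one_of_pos (show 0 < q / a by positivity)
    have : a * Real.log (q / a) ≤ q - a := by
      calc a * Real.log (q / a) ≤ a * (q / a - 1) :=
        mul_le_mul_of_nonneg_left hlog ha0
      _ = q - a := by field_simp
    rw [Real.log_div (ne_of_gt hq) (ne_of_gt h), mul_sub] at this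
    rw [Real.negMulLog]
    linarith

lemma gibbs {a q : ι → ℝ} (ha0 : ∀ i, 0 ≤ a i) (ha1 : ∀ i, a i ≤ 1)
    (hq0 : ∀ i, 0 ≤ q i) (hac : ∀ i, q i = 0 → a i = 0)
    (hsa : Summable a) (hsq : Summable q) (hqa : ∑' i, q i ≤ ∑' i, a i)
    (hcross : Summable fun i => a i * (-Real.log (q i))) :
    (Summable fun i => Real.negMulLog (a i)) ∧
      ∑' i, Real.negMulLog (a i) ≤ ∑' i, a i * (-Real.log (q i)) := by
  have hpt : ∀ i, Real.negMulLog (a i) ≤ a i * (-Real.log (q i)) + (q i - a i) :=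
    fun i => gibbs_pointwise (ha0 i) (hq0 i) (hac i)
  have hg : Summable fun i => a i * (-Real.log (q i)) + (q i - a i) :=
    hcross.add (hsq.sub hsa)
  have hs : Summable fun i => Real.negMulLog (a i) :=
    Summable.of_nonneg_of_le (fun i => Real.negMulLog_nonneg (ha0 i) (ha1 i)) hpt hg
  refine ⟨hs, ?_⟩
  calc ∑' i, Real.negMulLog (a i) ≤ ∑' i, (a i * (-Real.log (q i)) + (q i - a i)) :=
      Summable.tsum_le_tsum hpt hs hg
  _ = (∑' i, a i * (-Real.log (q i))) + ((∑' i, q i) - ∑' i, a i) := by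
      rw [Summable.tsum_add hcross (hsq.sub hsa), Summable.tsum_sub hsq hsa]
  _ ≤ ∑' i, a i * (-Real.log (q i)) := by linarith

end gibbs

section marg
variable {S X Y : Type*}

lemma pmf_marg (μ : PMF S) (g : S → X) (c : X → ℝ) :
    ∑' s, ENNReal.ofReal ((μ s).toReal * c (g s))
      = ∑' x, ENNReal.ofReal (((μ.map g) x).toReal * c x) := by
  have hL : ∀ s, ENNReal.ofReal ((μ s).toReal * c (g s))
      = μ s * ENNReal.ofReal (c (g s)) := by
    intro s
    rw [ENNReal.ofReal_mul ENNReal.toReal_nonneg, ENNReal.ofReal_toReal (PMF.apply_ne_top _ _)]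
  have hR : ∀ x, ENNReal.ofReal (((μ.map g) x).toReal * c x)
      = (μ.map g) x * ENNReal.ofReal (c x) := by
    intro x
    rw [ENNReal.ofReal_mul ENNReal.toReal_nonneg, ENNReal.ofReal_toReal (PMF.apply_ne_top _ _)]
  rw [tsum_congr hL, tsum_congr hR]
  symm
  calc ∑' x, (μ.map g) x * ENNReal.ofReal (c x)
      = ∑' (x) (s), (if x = g s then μ s else 0) * ENNReal.ofReal (c x) := by
        apply tsum_congr; intro x
        rw [PMF.map_apply, ENNReal.tsum_mul_right]
    _ = ∑' (s) (x), (if x = g s then μ s else 0) * ENNReal.ofReal (c x) := ENNReal.tsum_comm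
    _ = ∑' s, μ s * ENNReal.ofReal (c (g s)) := by
        apply tsum_congr; intro s
        rw [tsum_eq_single (g s) (fun x hx => by simp [hx])]
        simp

lemma nent_ne_top_iff (μ : PMF S) :
    nent μ ≠ ⊤ ↔ Summable fun s => Real.negMulLog (μ s).toReal :=
  (summable_iff_ofReal_ne_top (pmf_negMulLog_nonneg μ)).symm

lemma nent_toReal (μ : PMF S) :
    (∑' s, Real.negMulLog (μ s).toReal) = (nent μ).toReal :=
  tsum_eq_toReal_tsum_ofReal (pmf_negMulLog_nonneg μ)

lemma cross_term (ν : PMF S) (g : S → X) (hfin : nent (ν.map g) ≠ ⊤) :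
    (Summable fun s => (ν s).toReal * (-Real.log ((ν.map g) (g s)).toReal)) ∧
      ∑' s, (ν s).toReal * (-Real.log ((ν.map g) (g s)).toReal) = (nent (ν.map g)).toReal := by
  set c : X → ℝ := fun x => -Real.log ((ν.map g) x).toReal with hcdef
  have hc0 : ∀ x, 0 ≤ c x := fun x => by
    rw [hcdef]; simp only [neg_nonneg]
    exact Real.log_nonpos ENNReal.toReal_nonneg (pmf_toReal_le_one _ x)
  have hnn : ∀ s, 0 ≤ (ν s).toReal * c (g s) := fun s =>
    mul_nonneg ENNReal.toReal_nonneg (hc0 _)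
  have hmarg := pmf_marg ν g c
  have hterm : ∀ x, ((ν.map g) x).toReal * c x = Real.negMulLog ((ν.map g) x).toReal := by
    intro x; rw [hcdef, Real.negMulLog]; ring
  have hqform : (∑' x, ENNReal.ofReal (((ν.map g) x).toReal * c x)) = nent (ν.map g) := by
    apply tsum_congr; intro x; rw [hterm]
  rw [hqform] at hmarg
  constructor
  · exact (summable_iff_ofReal_ne_top hnn).2 (hmarg ▸ hfin)
  · rw [tsum_eq_toReal_tsum_ofReal hnn, hmarg]

lemma nent_pair_le (ν : PMF (X × Y)) :
    nent ν ≤ nent (ν.map Prod.fst) + nent (ν.map Prod.snd) := by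
  by_cases htop : nent (ν.map Prod.fst) = ⊤ ∨ nent (ν.map Prod.snd) = ⊤
  · rcases htop with h | h <;> simp [h]
  push_neg at htop
  obtain ⟨hX, hY⟩ := htop
  set mX := ν.map Prod.fst
  set mY := ν.map Prod.snd
  set a : X × Y → ℝ := fun z => (ν z).toReal with hadef
  set q : X × Y → ℝ := fun z => (mX z.1).toReal * (mY z.2).toReal with hqdef
  have hq0 : ∀ z, 0 ≤ q z := fun z => mul_nonneg ENNReal.toReal_nonneg ENNReal.toReal_nonneg
  have hac : ∀ z, q z = 0 → a z = 0 := by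
    intro z hz
    rcases mul_eq_zero.1 hz with h | h
    · have : mX z.1 = 0 := by
        rwa [ENNReal.toReal_eq_zero_iff, or_iff_left (PMF.apply_ne_top _ _)] at h
      have hle : ν z ≤ mX z.1 := pmf_le_map ν Prod.fst z
      rw [hadef]; simp only [ENNReal.toReal_eq_zero_iff]
      exact Or.inl (le_antisymm (this ▸ hle) zero_le)
    · have : mY z.2 = 0 := by
        rwa [ENNReal.toReal_eq_zero_iff, or_iff_left (PMF.apply_ne_top _ _)] at h
      have hle : ν z ≤ mY z.2 := pmf_le_map ν Prod.snd z
      rw [hadef]; simp only [ENNReal.toReal_eq_zero_iff]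
      exact Or.inl (le_antisymm (this ▸ hle) zero_le)
  have hqofReal : ∀ z : X × Y, ENNReal.ofReal (q z) = mX z.1 * mY z.2 := by
    intro z
    rw [hqdef, ENNReal.ofReal_mul ENNReal.toReal_nonneg,
      ENNReal.ofReal_toReal (PMF.apply_ne_top _ _), ENNReal.ofReal_toReal (PMF.apply_ne_top _ _)]
  have hqsum : (∑' z : X × Y, ENNReal.ofReal (q z)) = 1 := by
    rw [tsum_congr hqofReal, ENNReal.tsum_prod']
    calc ∑' (x) (y), mX x * mY y = ∑' x, mX x * ∑' y, mY y := by
          apply tsum_congr; intro x; rw [ENNReal.tsum_mul_left]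
      _ = 1 := by simp [mY.tsum_coe, mX.tsum_coe]
  have hsq : Summable q := (summable_iff_ofReal_ne_top hq0).2 (by rw [hqsum]; simp)
  have hqval : ∑' z, q z = 1 := by
    rw [tsum_eq_toReal_tsum_ofReal hq0, hqsum]; simp
  have hcross1 := cross_term ν Prod.fst hX
  have hcross2 := cross_term ν Prod.snd hY
  have hsplit : ∀ z : X × Y, a z * (-Real.log (q z))
      = a z * (-Real.log (mX z.1).toReal) + a z * (-Real.log (mY z.2).toReal) := by
    intro z
    by_cases hz : a z = 0
    · rw [hz]; ring
    · have hq : q z ≠ 0 := fun h => hz (hac z h)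
      have h1 : (mX z.1).toReal ≠ 0 := fun h => hq (by rw [hqdef]; simp [h])
      have h2 : (mY z.2).toReal ≠ 0 := fun h => hq (by rw [hqdef]; simp [h])
      rw [hqdef]
      simp only []
      rw [Real.log_mul h1 h2]
      ring
  have hcross : Summable fun z => a z * (-Real.log (q z)) := by
    rw [show (fun z => a z * (-Real.log (q z))) = fun z =>
      a z * (-Real.log (mX z.1).toReal) + a z * (-Real.log (mY z.2).toReal) from funext hsplit]
    exact hcross1.1.add hcross2.1
  have hga := gibbs (fun z => ENNReal.toReal_nonneg) (pmf_toReal_le_one ν) hq0 hac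
    (pmf_summable_toReal ν) hsq (by rw [hqval, pmf_tsum_toReal]) hcross
  have hsumval : ∑' z, a z * (-Real.log (q z))
      = (nent mX).toReal + (nent mY).toReal := by
    rw [tsum_congr hsplit, Summable.tsum_add hcross1.1 hcross2.1, hcross1.2, hcross2.2]
  have : nent ν = ENNReal.ofReal (∑' z, Real.negMulLog (a z)) := by
    rw [ENNReal.ofReal_tsum_of_nonneg (pmf_negMulLog_nonneg ν) hga.1]; rfl
  rw [this]
  calc ENNReal.ofReal (∑' z, Real.negMulLog (a z))
      ≤ ENNReal.ofReal ((nent mX).toReal + (nent mY).toReal) :=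
        ENNReal.ofReal_le_ofReal (by rw [← hsumval]; exact hga.2)
    _ ≤ nent mX + nent mY := by
        rw [ENNReal.ofReal_add ENNReal.toReal_nonneg ENNReal.toReal_nonneg,
          ENNReal.ofReal_toReal hX, ENNReal.ofReal_toReal hY]
end marg

section submod
variable {X Y Z : Type*}

lemma map_snd_apply (ν : PMF (X × Y)) (y : Y) :
    (ν.map Prod.snd) y = ∑' x, ν (x, y) := by
  rw [PMF.map_apply, ENNReal.tsum_prod']
  apply tsum_congr; intro x
  rw [tsum_eq_single y (fun y' hy' => by simp [Ne.symm hy'])]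
  simp

lemma map_fst_apply (ν : PMF (X × Y)) (x : X) :
    (ν.map Prod.fst) x = ∑' y, ν (x, y) := by
  rw [PMF.map_apply, ENNReal.tsum_prod']
  rw [tsum_eq_single x (fun x' hx' => by simp [Ne.symm hx'])]
  simp

lemma pmf_map_toReal_zero {S W : Type*} (μ : PMF S) (g : S → W) (z : S)
    (h : ((μ.map g) (g z)).toReal = 0) : μ z = 0 := by
  have h0 : (μ.map g) (g z) = 0 := by
    rwa [ENNReal.toReal_eq_zero_iff, or_iff_left (PMF.apply_ne_top _ _)] at h
  exact le_antisymm (h0 ▸ pmf_le_map μ g z) zero_le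

lemma nent_submod (μ : PMF (X × Y × Z)) (hfin : nent μ ≠ ⊤) :
    (nent μ).toReal + (nent (μ.map fun z => z.2.1)).toReal
      ≤ (nent (μ.map fun z => (z.1, z.2.1))).toReal + (nent (μ.map fun z => z.2)).toReal := by
  set pXY : X × Y × Z → X × Y := fun z => (z.1, z.2.1) with hpXY
  set pYZ : X × Y × Z → Y × Z := fun z => z.2 with hpYZ
  set pY : X × Y × Z → Y := fun z => z.2.1 with hpY
  set mXY := μ.map pXY with hmXY
  set mYZ := μ.map pYZ with hmYZ
  set mY := μ.map pY with hmY
  have hXY : nent mXY ≠ ⊤ := fun h => hfin (top_le_iff.1 (h ▸ nent_map_le μ pXY))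
  have hYZ : nent mYZ ≠ ⊤ := fun h => hfin (top_le_iff.1 (h ▸ nent_map_le μ pYZ))
  have hY : nent mY ≠ ⊤ := fun h => hfin (top_le_iff.1 (h ▸ nent_map_le μ pY))
  -- marginal consistency
  have hconsX : ∀ y : Y, ∑' x, mXY (x, y) = mY y := by
    intro y
    rw [← map_snd_apply mXY y, hmXY, PMF.map_comp]
    rfl
  have hconsZ : ∀ y : Y, ∑' z, mYZ (y, z) = mY y := by
    intro y
    rw [← map_fst_apply mYZ y, hmYZ, PMF.map_comp]
    rfl
  set a : X × Y × Z → ℝ := fun z => (μ z).toReal with hadef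
  set q : X × Y × Z → ℝ :=
    fun z => (mXY (pXY z)).toReal * (mYZ (pYZ z)).toReal / (mY (pY z)).toReal with hqdef
  have hq0 : ∀ z, 0 ≤ q z := fun z =>
    div_nonneg (mul_nonneg ENNReal.toReal_nonneg ENNReal.toReal_nonneg) ENNReal.toReal_nonneg
  have hac : ∀ z, q z = 0 → a z = 0 := by
    intro z hz
    have hz' : (mXY (pXY z)).toReal * (mYZ (pYZ z)).toReal / (mY (pY z)).toReal = 0 := hz
    have : μ z = 0 := by
      rcases _root_.div_eq_zero_iff.1 hz' with h | h
      · rcases mul_eq_zero.1 h with h' | h'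
        · exact pmf_map_toReal_zero μ pXY z h'
        · exact pmf_map_toReal_zero μ pYZ z h'
      · exact pmf_map_toReal_zero μ pY z h
    rw [hadef]; simp [this]
  -- sum of q equals 1
  have hqofReal : ∀ z, ENNReal.ofReal (q z)
      = if mY (pY z) = 0 then 0 else mXY (pXY z) * mYZ (pYZ z) / mY (pY z) := by
    intro z
    by_cases h : mY (pY z) = 0
    · rw [if_pos h, hqdef]
      simp [h]
    · rw [if_neg h, hqdef]
      have hne : mXY (pXY z) * mYZ (pYZ z) / mY (pY z) ≠ ⊤ :=
        (ENNReal.div_lt_top (ENNReal.mul_ne_top (PMF.apply_ne_top _ _) (PMF.apply_ne_top _ _))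
          h).ne
      rw [← ENNReal.ofReal_toReal hne, ENNReal.toReal_div, ENNReal.toReal_mul]
  have hqsum : (∑' z, ENNReal.ofReal (q z)) = 1 := by
    rw [tsum_congr hqofReal]
    have hstep : ∀ y : Y, (∑' (x : X) (z : Z),
        if mY y = 0 then 0 else mXY (x, y) * mYZ (y, z) / mY y) = mY y := by
      intro y
      by_cases h : mY y = 0
      · simp [h]
      · simp only [if_neg h]
        have hinner : ∀ x : X, (∑' (z : Z), mXY (x, y) * mYZ (y, z) / mY y) = mXY (x, y) := by
          intro x
          calc ∑' (z : Z), mXY (x, y) * mYZ (y, z) / mY y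
              = ∑' (z : Z), mYZ (y, z) * (mXY (x, y) / mY y) := by
                apply tsum_congr; intro z
                rw [div_eq_mul_inv, div_eq_mul_inv]; ring
            _ = (∑' (z : Z), mYZ (y, z)) * (mXY (x, y) / mY y) := ENNReal.tsum_mul_right
            _ = mXY (x, y) * (mY y / mY y) := by
                rw [hconsZ y, div_eq_mul_inv, div_eq_mul_inv]; ring
            _ = mXY (x, y) := by rw [ENNReal.div_self h (PMF.apply_ne_top _ _), mul_one]
        rw [tsum_congr hinner]
        exact hconsX y
    calc (∑' z : X × Y × Z,
        if mY (pY z) = 0 then 0 else mXY (pXY z) * mYZ (pYZ z) / mY (pY z))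
        = ∑' (x : X) (p : Y × Z),
            (if mY p.1 = 0 then 0 else mXY (x, p.1) * mYZ p / mY p.1) :=
          ENNReal.tsum_prod'
      _ = ∑' (x : X) (y : Y) (z : Z),
            if mY y = 0 then 0 else mXY (x, y) * mYZ (y, z) / mY y := by
          apply tsum_congr; intro x
          exact ENNReal.tsum_prod'
      _ = ∑' (y : Y) (x : X) (z : Z),
            if mY y = 0 then 0 else mXY (x, y) * mYZ (y, z) / mY y := ENNReal.tsum_comm
      _ = ∑' y : Y, mY y := tsum_congr hstep
      _ = 1 := mY.tsum_coe
  have hsq : Summable q := (summable_iff_ofReal_ne_top hq0).2 (by rw [hqsum]; simp)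
  have hqval : ∑' z, q z = 1 := by
    rw [tsum_eq_toReal_tsum_ofReal hq0, hqsum]; simp
  have hcross1 := cross_term μ pXY hXY
  have hcross2 := cross_term μ pYZ hYZ
  have hcross3 := cross_term μ pY hY
  have hsplit : ∀ z, a z * (-Real.log (q z))
      = a z * (-Real.log (mXY (pXY z)).toReal) + a z * (-Real.log (mYZ (pYZ z)).toReal)
        - a z * (-Real.log (mY (pY z)).toReal) := by
    intro z
    by_cases hz : a z = 0
    · rw [hz]; ring
    · have hq : q z ≠ 0 := fun h => hz (hac z h)
      have h1 : (mXY (pXY z)).toReal ≠ 0 := by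
        intro h; apply hq
        show (mXY (pXY z)).toReal * (mYZ (pYZ z)).toReal / (mY (pY z)).toReal = 0
        simp [h]
      have h2 : (mYZ (pYZ z)).toReal ≠ 0 := by
        intro h; apply hq
        show (mXY (pXY z)).toReal * (mYZ (pYZ z)).toReal / (mY (pY z)).toReal = 0
        simp [h]
      have h3 : (mY (pY z)).toReal ≠ 0 := by
        intro h; apply hq
        show (mXY (pXY z)).toReal * (mYZ (pYZ z)).toReal / (mY (pY z)).toReal = 0
        simp [h]
      show (μ z).toReal * (-Real.log ((mXY (pXY z)).toReal * (mYZ (pYZ z)).toReal / (mY (pY z)).toReal)) = _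
      rw [Real.log_div (mul_ne_zero h1 h2) h3, Real.log_mul h1 h2]
      ring
  have hcrosssum : Summable fun z => a z * (-Real.log (q z)) := by
    rw [show (fun z => a z * (-Real.log (q z))) = _ from funext hsplit]
    exact (hcross1.1.add hcross2.1).sub hcross3.1
  have hga := gibbs (fun z => ENNReal.toReal_nonneg) (pmf_toReal_le_one μ) hq0 hac
    (pmf_summable_toReal μ) hsq (by rw [hqval, pmf_tsum_toReal]) hcrosssum
  have hsumval : ∑' z, a z * (-Real.log (q z))
      = (nent mXY).toReal + (nent mYZ).toReal - (nent mY).toReal := by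
    rw [tsum_congr hsplit, Summable.tsum_sub (hcross1.1.add hcross2.1) hcross3.1,
      Summable.tsum_add hcross1.1 hcross2.1, hcross1.2, hcross2.2, hcross3.2]
  have hent : (nent μ).toReal = ∑' z, Real.negMulLog (a z) := (nent_toReal μ).symm
  have := hga.2
  rw [hsumval] at this
  rw [hent]
  linarith

end submod



namespace Paper

variable {n : ℕ}

section Aux
section bridge

lemma nent_comp_le {S X Y : Type*} (p : PMF S) (f : S → X) (g : S → Y) (h : Y → X)
    (hfg : f = h ∘ g) : nent (p.map f) ≤ nent (p.map g) := by
  rw [hfg, ← PMF.map_comp]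
  exact nent_map_le _ h

lemma nent_comp_eq {S X Y : Type*} (p : PMF S) (f : S → X) (g : S → Y) (h : Y → X) (h' : X → Y)
    (hfg : f = h ∘ g) (hgf : g = h' ∘ f) : nent (p.map f) = nent (p.map g) :=
  le_antisymm (nent_comp_le p f g h hfg) (nent_comp_le p g f h' hgf)

lemma nent_subsingleton {T : Type*} (μ : PMF T) (h : ∀ t t' : T, t = t') : nent μ = 0 := by
  have h1 : ∀ t : T, μ t = 1 := by
    intro t
    have : ∑' t', μ t' = μ t := tsum_eq_single t (fun t' ht' => absurd (h t' t) ht')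
    rw [← this, μ.tsum_coe]
  have : ∀ t : T, ENNReal.ofReal (Real.negMulLog (μ t).toReal) = 0 := by
    intro t; rw [h1 t]; simp
  rw [nent, tsum_congr this]; simp

variable {n : ℕ}

/-- restriction map -/
noncomputable def res (γ : Finset (Fin n)) : (Fin n → ℕ) → ({ i // i ∈ γ } → ℕ) :=
  fun x j => x j.1

lemma marginal_eq (p : PMF (Fin n → ℕ)) (γ : Finset (Fin n)) :
    marginal p γ = p.map (res γ) := rfl

lemma Hm_eq (p : PMF (Fin n → ℕ)) (γ : Finset (Fin n)) :
    Hm p γ = (nent (marginal p γ)).toReal := nent_toReal (marginal p γ)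

lemma nent_marginal_ne_top (p : PMF (Fin n → ℕ)) (hp : FiniteEntropy p) (γ : Finset (Fin n)) :
    nent (marginal p γ) ≠ ⊤ := by
  induction γ using Finset.induction_on with
  | empty =>
      have : nent (marginal p ∅) = 0 := by
        apply nent_subsingleton
        intro t t'
        funext j
        exact absurd j.2 (Finset.notMem_empty j.1)
      rw [this]; simp
  | @insert i s hi ih =>
      set F : (Fin n → ℕ) → ℕ × ({ j // j ∈ s } → ℕ) := fun x => (x i, res s x) with hF
      have h1 : nent (marginal p (insert i s)) = nent (p.map F) := by
        rw [marginal_eq]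
        refine nent_comp_eq p (res (insert i s)) F
          (fun z j => if hj : j.1 = i then z.1 else z.2 ⟨j.1, Finset.mem_of_mem_insert_of_ne j.2 hj⟩)
          (fun y => (y ⟨i, Finset.mem_insert_self i s⟩,
            fun j => y ⟨j.1, Finset.mem_insert_of_mem j.2⟩)) ?_ rfl
        funext x
        funext j
        symm
        show (if hj : j.1 = i then x i else x j.1) = x j.1
        split
        · next hj => rw [hj]
        · rfl
      have h2 : nent (p.map F) ≤ nent (p.map fun x => x i) + nent (marginal p s) := by
        have := nent_pair_le (p.map F)
        rw [PMF.map_comp, PMF.map_comp] at this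
        exact this
      have h3 : nent (p.map fun x => x i) ≠ ⊤ := (nent_ne_top_iff _).2 (hp i)
      rw [h1]
      intro htop
      rw [htop, top_le_iff, ENNReal.add_eq_top] at h2
      rcases h2 with h | h
      · exact h3 h
      · exact ih h

variable (p : PMF (Fin n → ℕ))

lemma hm_nonneg (γ : Finset (Fin n)) : 0 ≤ Hm p γ :=
  tsum_nonneg (fun y => pmf_negMulLog_nonneg _ y)

lemma hm_mono (hp : FiniteEntropy p) {α β : Finset (Fin n)} (hs : α ⊆ β) :
    Hm p α ≤ Hm p β := by
  rw [Hm_eq, Hm_eq]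
  apply ENNReal.toReal_mono (nent_marginal_ne_top p hp β)
  rw [marginal_eq, marginal_eq]
  exact nent_comp_le p (res α) (res β) (fun y j => y ⟨j.1, hs j.2⟩) rfl

lemma hm_submod (hp : FiniteEntropy p) (α β : Finset (Fin n)) :
    Hm p (α ∪ β) + Hm p (α ∩ β) ≤ Hm p α + Hm p β := by
  classical
  set F : (Fin n → ℕ) →
      ({ i // i ∈ α \ β } → ℕ) × ({ i // i ∈ α ∩ β } → ℕ) × ({ i // i ∈ β \ α } → ℕ) :=
    fun x => (res (α \ β) x, res (α ∩ β) x, res (β \ α) x) with hF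
  set μ := p.map F with hμ
  -- nent μ = nent of marginal (α ∪ β)
  have hAsub : α \ β ⊆ α ∪ β := (Finset.sdiff_subset).trans Finset.subset_union_left
  have hBsub : α ∩ β ⊆ α ∪ β := (Finset.inter_subset_left).trans Finset.subset_union_left
  have hDsub : β \ α ⊆ α ∪ β := (Finset.sdiff_subset).trans Finset.subset_union_right
  have hmem : ∀ (j : Fin n), j ∈ α ∪ β → j ∉ α \ β → j ∉ α ∩ β → j ∈ β \ α := by
    intro j hj h1 h2
    simp only [Finset.mem_union, Finset.mem_sdiff, Finset.mem_inter, not_and, not_not] at *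
    tauto
  have hU : nent μ = nent (marginal p (α ∪ β)) := by
    rw [hμ, marginal_eq]
    refine nent_comp_eq p F (res (α ∪ β))
      (fun y => (fun j => y ⟨j.1, hAsub j.2⟩, fun j => y ⟨j.1, hBsub j.2⟩,
        fun j => y ⟨j.1, hDsub j.2⟩)) 
      (fun z j => if h1 : j.1 ∈ α \ β then z.1 ⟨j.1, h1⟩ else
        if h2 : j.1 ∈ α ∩ β then z.2.1 ⟨j.1, h2⟩ else z.2.2 ⟨j.1, hmem j.1 j.2 h1 h2⟩)
      rfl ?_
    funext x
    funext j
    symm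
    show (if h1 : j.1 ∈ α \ β then x j.1 else if h2 : j.1 ∈ α ∩ β then x j.1 else x j.1) = x j.1
    split
    · rfl
    · split <;> rfl
  have hfinμ : nent μ ≠ ⊤ := by rw [hU]; exact nent_marginal_ne_top p hp _
  have hsub := nent_submod μ hfinμ
  -- identify the four entropies
  have hY : nent (μ.map fun z => z.2.1) = nent (marginal p (α ∩ β)) := by
    rw [hμ, PMF.map_comp, marginal_eq]
    rfl
  have hmemα : ∀ (j : Fin n), j ∈ α → j ∉ α \ β → j ∈ α ∩ β := by
    intro j hj h1
    simp only [Finset.mem_sdiff, Finset.mem_inter, not_and, not_not] at *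
    tauto
  have hXY : nent (μ.map fun z => (z.1, z.2.1)) = nent (marginal p α) := by
    rw [hμ, PMF.map_comp, marginal_eq]
    refine nent_comp_eq p _ (res α)
      (fun y => (fun j => y ⟨j.1, Finset.sdiff_subset j.2⟩,
        fun j => y ⟨j.1, Finset.inter_subset_left j.2⟩))
      (fun z j => if h1 : j.1 ∈ α \ β then z.1 ⟨j.1, h1⟩ else z.2 ⟨j.1, hmemα j.1 j.2 h1⟩)
      rfl ?_
    funext x
    funext j
    symm
    show (if h1 : j.1 ∈ α \ β then x j.1 else x j.1) = x j.1
    split <;> rfl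
  have hmemβ : ∀ (j : Fin n), j ∈ β → j ∉ α ∩ β → j ∈ β \ α := by
    intro j hj h1
    simp only [Finset.mem_sdiff, Finset.mem_inter, not_and, not_not] at *
    tauto
  have hYZ : nent (μ.map fun z => z.2) = nent (marginal p β) := by
    rw [hμ, PMF.map_comp, marginal_eq]
    refine nent_comp_eq p _ (res β)
      (fun y => (fun j => y ⟨j.1, Finset.inter_subset_right j.2⟩,
        fun j => y ⟨j.1, Finset.sdiff_subset j.2⟩))
      (fun z j => if h1 : j.1 ∈ α ∩ β then z.1 ⟨j.1, h1⟩ else z.2 ⟨j.1, hmemβ j.1 j.2 h1⟩)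
      rfl ?_
    funext x
    funext j
    symm
    show (if h1 : j.1 ∈ α ∩ β then x j.1 else x j.1) = x j.1
    split <;> rfl
  rw [hU, hY, hXY, hYZ] at hsub
  rw [Hm_eq, Hm_eq, Hm_eq, Hm_eq]
  exact hsub

end bridge

variable {n : ℕ} (p : PMF (Fin n → ℕ))

lemma hm_congr {α β : Finset (Fin n)} (h : α = β) : Hm p α = Hm p β := by rw [h]

lemma hc_nonneg (hp : FiniteEntropy p) (β α : Finset (Fin n)) : 0 ≤ Hc p β α := by
  rw [Hc, sub_nonneg]
  exact hm_mono p hp Finset.subset_union_right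

lemma hc_empty (α : Finset (Fin n)) : Hc p ∅ α = 0 := by
  rw [Hc, Finset.empty_union, sub_self]

lemma hc_chain {γ β : Finset (Fin n)} (h : γ ⊆ β) (α : Finset (Fin n)) :
    Hc p β α = Hc p γ α + Hc p β (γ ∪ α) := by
  rw [Hc, Hc, Hc]
  have h1 : β ∪ (γ ∪ α) = β ∪ α := by
    rw [← Finset.union_assoc, Finset.union_eq_left.2 h]
  rw [h1]; ring

lemma hc_mono_cond (hp : FiniteEntropy p) {α' α : Finset (Fin n)} (h : α' ⊆ α)
    (β : Finset (Fin n)) : Hc p β α ≤ Hc p β α' := by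
  rw [Hc, Hc, sub_le_sub_iff]
  have := hm_submod p hp α (β ∪ α')
  have h1 : α ∪ (β ∪ α') = β ∪ α := by
    ext x
    have hx := @h x
    simp only [Finset.mem_union]
    tauto
  have h2 : α' ⊆ α ∩ (β ∪ α') :=
    Finset.subset_inter h Finset.subset_union_right
  have h3 := hm_mono p hp h2
  rw [h1] at this
  linarith

lemma hc_union_le (hp : FiniteEntropy p) (β γ α : Finset (Fin n)) :
    Hc p (β ∪ γ) α ≤ Hc p β α + Hc p γ α := by
  have h1 : Hc p (β ∪ γ) α = Hc p β α + Hc p (β ∪ γ) (β ∪ α) :=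
    hc_chain p Finset.subset_union_left α
  have h2 : Hc p (β ∪ γ) (β ∪ α) = Hc p γ (β ∪ α) := by
    rw [Hc, Hc]
    have : β ∪ γ ∪ (β ∪ α) = γ ∪ (β ∪ α) := by
      ext x
      simp only [Finset.mem_union]
      tauto
    rw [this]
  have h3 : Hc p γ (β ∪ α) ≤ Hc p γ α := hc_mono_cond p hp Finset.subset_union_right γ
  linarith

lemma hc_sup_le {ι : Type*} [DecidableEq ι] (hp : FiniteEntropy p) (s : Finset ι)
    (f : ι → Finset (Fin n)) (α : Finset (Fin n)) :
    Hc p (s.sup f) α ≤ ∑ i ∈ s, Hc p (f i) α := by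
  induction s using Finset.induction_on with
  | empty => rw [Finset.sup_empty, Finset.sum_empty]; exact le_of_eq (hc_empty p α)
  | @insert i s hi ih =>
      rw [Finset.sup_insert, Finset.sum_insert hi]
      calc Hc p (f i ⊔ s.sup f) α ≤ Hc p (f i) α + Hc p (s.sup f) α :=
            hc_union_le p hp (f i) (s.sup f) α
        _ ≤ Hc p (f i) α + ∑ i ∈ s, Hc p (f i) α := by linarith

/-- Key lemma: subfamilies inherit conditional independence. -/
lemma key_subset {ι : Type*} [DecidableEq ι] (hp : FiniteEntropy p) (s : Finset ι)
    (B S : ι → Finset (Fin n)) (hSB : ∀ i ∈ s, S i ⊆ B i) (α : Finset (Fin n))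
    (hind : ∑ i ∈ s, Hc p (B i) α ≤ Hc p (s.sup B) α) :
    ∑ i ∈ s, Hc p (S i) α ≤ Hc p (s.sup S) α := by
  have hchain : ∀ i ∈ s, Hc p (B i) α = Hc p (S i) α + Hc p (B i) (S i ∪ α) :=
    fun i hi => hc_chain p (hSB i hi) α
  have hsupS_le : s.sup S ⊆ s.sup B :=
    Finset.sup_le fun i hi => le_trans (show S i ≤ B i from hSB i hi) (Finset.le_sup hi)
  have hsum1 : ∑ i ∈ s, Hc p (B i) α
      = ∑ i ∈ s, Hc p (S i) α + ∑ i ∈ s, Hc p (B i) (S i ∪ α) := by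
    rw [← Finset.sum_add_distrib]
    exact Finset.sum_congr rfl hchain
  have htop : Hc p (s.sup B) α = Hc p (s.sup S) α + Hc p (s.sup B) (s.sup S ∪ α) :=
    hc_chain p hsupS_le α
  have h4 : Hc p (s.sup B) (s.sup S ∪ α) ≤ ∑ i ∈ s, Hc p (B i) (s.sup S ∪ α) :=
    hc_sup_le p hp s B (s.sup S ∪ α)
  have h5 : ∑ i ∈ s, Hc p (B i) (s.sup S ∪ α) ≤ ∑ i ∈ s, Hc p (B i) (S i ∪ α) := by
    apply Finset.sum_le_sum
    intro i hi
    exact hc_mono_cond p hp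
      (Finset.union_subset_union (show S i ≤ s.sup S from Finset.le_sup hi) subset_rfl) (B i)
  linarith


variable {n : ℕ}

lemma J_map_eq (p : PMF (Fin n → ℕ)) {k : ℕ} (f : Fin k → Finset (Fin n)) (C : Finset (Fin n)) :
    J p C (Multiset.map f Finset.univ.val)
      = (∑ i, Hc p (f i) C) - Hc p (Finset.univ.sup f) C := by
  have h1 : (Multiset.map (fun Q => Hc p Q C) (Multiset.map f Finset.univ.val)).sum
      = ∑ i, Hc p (f i) C := by
    rw [Multiset.map_map]
    rfl
  have h2 : (Multiset.map f Finset.univ.val).sup = Finset.univ.sup f := (Finset.sup_def).symm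
  rw [J, h1, h2]

theorem stmt19' {n k r : ℕ}
    (p : PMF (Fin n → ℕ)) (hp : FiniteEntropy p)
    (C : Finset (Fin n)) (Q W : Fin k → Finset (Fin n)) (hW : ∀ i, W i ⊆ Q i)
    (A : Fin r → Finset (Fin k)) (hA : ∀ j j', j ≠ j' → Disjoint (A j) (A j'))
    (G : Fin r → Finset (Fin n)) (hG : ∀ j, G j = (A j).sup W)
    (R : Finset (Fin n)) (hR : R ⊆ Finset.univ.sup Q \ Finset.univ.sup G)
    (hval : Valid p ⟨C, Multiset.map Q Finset.univ.val⟩) :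
    Valid p ⟨C ∪ R, Multiset.map G Finset.univ.val⟩ := by
  classical
  have hv : (∑ i, Hc p (Q i) C) = Hc p (Finset.univ.sup Q) C := by
    have h := hval
    rw [Valid] at h
    rw [J_map_eq] at h
    linarith
  set D : Finset (Fin k) := Finset.univ.filter (fun i => ∀ j, i ∉ A j) with hD
  set B' : Option (Fin r) → Finset (Fin n) :=
    fun o => match o with
      | none => D.sup Q
      | some j => (A j).sup Q
    with hB'
  set S2 : Option (Fin r) → Finset (Fin n) := fun o => R ∩ B' o with hS2
  set S1 : Option (Fin r) → Finset (Fin n) :=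
    fun o => match o with
      | none => R ∩ B' none
      | some j => G j ∪ (R ∩ B' (some j))
    with hS1
  have hGB : ∀ j, G j ⊆ B' (some j) := by
    intro j
    rw [hG j]
    exact Finset.sup_mono_fun (fun i _ => hW i)
  have hS1B : ∀ o ∈ (Finset.univ : Finset (Option (Fin r))), S1 o ⊆ B' o := by
    intro o _
    match o with
    | none => exact Finset.inter_subset_right
    | some j => exact Finset.union_subset (hGB j) Finset.inter_subset_right
  have hS2B : ∀ o ∈ (Finset.univ : Finset (Option (Fin r))), S2 o ⊆ B' o :=
    fun o _ => Finset.inter_subset_right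
  have hS2S1 : ∀ o, S2 o ⊆ S1 o := by
    intro o
    match o with
    | none => exact subset_rfl
    | some j => exact Finset.subset_union_right
  -- sup of blocks is sup of Q
  have supB : Finset.univ.sup B' = Finset.univ.sup Q := by
    apply le_antisymm
    · apply Finset.sup_le
      intro o _
      match o with
      | none => exact Finset.sup_mono (Finset.subset_univ D)
      | some j => exact Finset.sup_mono (Finset.subset_univ (A j))
    · apply Finset.sup_le
      intro i _
      by_cases hc : ∃ j, i ∈ A j
      · obtain ⟨j, hj⟩ := hc
        exact le_trans (Finset.le_sup hj) (Finset.le_sup (f := B') (Finset.mem_univ (some j)))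
      · push_neg at hc
        have hiD : i ∈ D := by
          rw [hD, Finset.mem_filter]
          exact ⟨Finset.mem_univ i, hc⟩
        exact le_trans (Finset.le_sup hiD) (Finset.le_sup (f := B') (Finset.mem_univ none))
  -- the blocks are conditionally independent
  have hUD : ∀ (f : Fin k → ℝ), ∑ i ∈ D, f i + ∑ j, ∑ i ∈ A j, f i = ∑ i, f i := by
    intro f
    have hdisj : Set.PairwiseDisjoint ((Finset.univ : Finset (Fin r)) : Set (Fin r)) A :=
      fun j _ j' _ hne => hA j j' hne
    have h1 : ∑ j, ∑ i ∈ A j, f i = ∑ i ∈ Finset.univ.biUnion A, f i :=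
      (Finset.sum_biUnion hdisj).symm
    have h2 : Finset.univ.biUnion A = Finset.univ.filter (fun i => ¬ ∀ j, i ∉ A j) := by
      ext i
      simp only [Finset.mem_biUnion, Finset.mem_filter, Finset.mem_univ, true_and]
      push_neg
      simp
    rw [h1, h2, hD]
    exact Finset.sum_filter_add_sum_filter_not _ _ _
  have hindB : ∑ o, Hc p (B' o) C ≤ Hc p (Finset.univ.sup B') C := by
    calc ∑ o, Hc p (B' o) C
        = Hc p (B' none) C + ∑ j, Hc p (B' (some j)) C := Fintype.sum_option _
      _ ≤ (∑ i ∈ D, Hc p (Q i) C) + ∑ j, ∑ i ∈ A j, Hc p (Q i) C := by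
          apply add_le_add
          · exact hc_sup_le p hp D Q C
          · exact Finset.sum_le_sum (fun j _ => hc_sup_le p hp (A j) Q C)
      _ = ∑ i, Hc p (Q i) C := hUD _
      _ = Hc p (Finset.univ.sup Q) C := hv
      _ = Hc p (Finset.univ.sup B') C := by rw [supB]
  have key1 := key_subset p hp Finset.univ B' S1 hS1B C hindB
  have key2 := key_subset p hp Finset.univ B' S2 hS2B C hindB
  have hRB : R ⊆ Finset.univ.sup B' := by
    rw [supB]
    exact fun x hx => (Finset.mem_sdiff.1 (hR hx)).1
  have sup_S1 : Finset.univ.sup S1 = Finset.univ.sup G ∪ R := by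
    apply le_antisymm
    · apply Finset.sup_le
      intro o _
      match o with
      | none => exact Finset.inter_subset_left.trans Finset.subset_union_right
      | some j =>
          apply Finset.union_subset
          · exact le_trans (Finset.le_sup (f := G) (Finset.mem_univ j)) le_sup_left
          · exact Finset.inter_subset_left.trans Finset.subset_union_right
    · apply Finset.union_subset
      · show Finset.univ.sup G ≤ Finset.univ.sup S1
        apply Finset.sup_le
        intro j _
        exact le_trans (show G j ≤ S1 (some j) from Finset.subset_union_left)
          (Finset.le_sup (f := S1) (Finset.mem_univ (some j)))
      · intro x hx
        obtain ⟨o, _, hxB⟩ := Finset.mem_sup.1 (hRB hx)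
        apply Finset.mem_sup.2
        refine ⟨o, Finset.mem_univ o, ?_⟩
        match o with
        | none => exact Finset.mem_inter.2 ⟨hx, hxB⟩
        | some j => exact Finset.mem_union_right _ (Finset.mem_inter.2 ⟨hx, hxB⟩)
  have sup_S2 : Finset.univ.sup S2 = R := by
    apply le_antisymm
    · exact Finset.sup_le (fun o _ => Finset.inter_subset_left)
    · intro x hx
      obtain ⟨o, _, hxB⟩ := Finset.mem_sup.1 (hRB hx)
      exact Finset.mem_sup.2 ⟨o, Finset.mem_univ o, Finset.mem_inter.2 ⟨hx, hxB⟩⟩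
  have e1 : ∑ o, Hc p (S1 o) C = Hc p (Finset.univ.sup G ∪ R) C := by
    rw [← sup_S1]
    exact le_antisymm key1 (hc_sup_le p hp Finset.univ S1 C)
  have e2 : ∑ o, Hc p (S2 o) C = Hc p R C := by
    rw [← sup_S2]
    exact le_antisymm key2 (hc_sup_le p hp Finset.univ S2 C)
  -- main estimate
  have step1 : ∀ j : Fin r, Hc p (G j) (C ∪ R)
      ≤ Hc p (S1 (some j)) C - Hc p (S2 (some j)) C := by
    intro j
    have hch : Hc p (S1 (some j)) C
        = Hc p (S2 (some j)) C + Hc p (S1 (some j)) (S2 (some j) ∪ C) :=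
      hc_chain p (hS2S1 (some j)) C
    have hcong : Hc p (S1 (some j)) (S2 (some j) ∪ C) = Hc p (G j) (S2 (some j) ∪ C) := by
      rw [Hc, Hc]
      congr 2
      ext x
      simp only [hS1, hS2, Finset.mem_union, Finset.mem_inter]
      tauto
    have hmono : Hc p (G j) (C ∪ R) ≤ Hc p (G j) (S2 (some j) ∪ C) := by
      apply hc_mono_cond p hp
      apply Finset.union_subset
      · exact Finset.inter_subset_left.trans Finset.subset_union_right
      · exact Finset.subset_union_left
    linarith
  have main : ∑ j, Hc p (G j) (C ∪ R) ≤ Hc p (Finset.univ.sup G) (C ∪ R) := by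
    calc ∑ j, Hc p (G j) (C ∪ R)
        ≤ ∑ j, (Hc p (S1 (some j)) C - Hc p (S2 (some j)) C) :=
          Finset.sum_le_sum (fun j _ => step1 j)
      _ = ∑ o, (Hc p (S1 o) C - Hc p (S2 o) C) := by
          rw [Fintype.sum_option]
          have : Hc p (S1 none) C - Hc p (S2 none) C = 0 := sub_self _
          rw [this, zero_add]
      _ = Hc p (Finset.univ.sup G ∪ R) C - Hc p R C := by
          rw [Finset.sum_sub_distrib, e1, e2]
      _ = Hc p (Finset.univ.sup G) (C ∪ R) := by
          have ha : Finset.univ.sup G ∪ R ∪ C = Finset.univ.sup G ∪ (C ∪ R) := by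
            ext x
            simp only [Finset.mem_union]
            tauto
          have hb : R ∪ C = C ∪ R := Finset.union_comm _ _
          rw [Hc, Hc, Hc, ha, hb]
          ring
  show J p (C ∪ R) (Multiset.map G Finset.univ.val) = 0
  rw [J_map_eq]
  have hge := hc_sup_le p hp Finset.univ G (C ∪ R)
  linarith


end Aux

/-- with `W_i ⊆ Q_i`, pairwise disjoint `A_1,…,A_r ⊆ {1,…,k}`
(`r ≤ k`), `G_j = ∪_{i ∈ A_j} W_i` and `R ⊆ (∪ Q_i) \ (∪ G_j)`: if
`(C,⟨Q_1,…,Q_k⟩)` is valid then `(C ∪ R, ⟨G_1,…,G_r⟩)` is valid. -/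
theorem stmt19 {n k r : ℕ} (hrk : r ≤ k)
    (p : PMF (Fin n → ℕ)) (hp : FiniteEntropy p)
    (C : Finset (Fin n)) (Q W : Fin k → Finset (Fin n)) (hW : ∀ i, W i ⊆ Q i)
    (A : Fin r → Finset (Fin k)) (hA : ∀ j j', j ≠ j' → Disjoint (A j) (A j'))
    (G : Fin r → Finset (Fin n)) (hG : ∀ j, G j = (A j).sup W)
    (R : Finset (Fin n)) (hR : R ⊆ Finset.univ.sup Q \ Finset.univ.sup G)
    (hval : Valid p ⟨C, Multiset.map Q Finset.univ.val⟩) :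
    Valid p ⟨C ∪ R, Multiset.map G Finset.univ.val⟩ := by
  exact stmt19' p hp C Q W hW A hA G hG R hR hval

end Paper
end
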